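/- For every complex number s with Re(s) > 1, the series ∑_{n=0}^∞ (1/2^{n+1}) · ∑_{k=0}^{n} binom(n,k) · (k+1)^{-s} converges and its sum equals ζ(s), the Riemann zeta function. -/

import Mathlib

/-!
For fixed `k`, the weights `C(n, k) / 2 ^ (n + 1)`, `n ≥ k`, sum to `1` (the negative binomial
series at `1/2`). Hence for an absolutely summable sequence `a` the double series
`∑ C(n, k) / 2 ^ (n + 1) • a k` converges absolutely; summing it over `n` first gives `∑ a k`,
summing it along the antidiagonals gives the Euler transform of `a`. For `a k = (k + 1) ^ (-s)`
with `1 < Re s` this is the Dirichlet series of `ζ(s)`.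
-/

open Finset

theorem HasSum.sum_antidiagonal {α A : Type*} [AddCommMonoid α] [TopologicalSpace α]
    [ContinuousAdd α] [RegularSpace α] [AddCommMonoid A] [HasAntidiagonal A] {f : A × A → α}
    {a : α} (hf : HasSum f a) : HasSum (fun n ↦ ∑ kl ∈ antidiagonal n, f kl) a :=
  (HasAntidiagonal.sigmaAntidiagonalEquivProd.hasSum_iff.2 hf).sigma fun n ↦
    (antidiagonal n).hasSum f

theorem hasSum_choose_add_div_two_pow (k : ℕ) :
    HasSum (fun m : ℕ ↦ ((k + m).choose k : ℝ) / 2 ^ (k + m + 1)) 1 := by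
  have hr : ‖(2⁻¹ : ℝ)‖ < 1 := by norm_num
  have h := (hasSum_choose_mul_geometric_of_norm_lt_one k hr).div_const (2 ^ (k + 1))
  have h_one : (1 : ℝ) / (1 - 2⁻¹) ^ (k + 1) / 2 ^ (k + 1) = 1 := by
    rw [div_div, ← mul_pow]
    norm_num
  rw [h_one] at h
  refine h.congr_fun fun m ↦ ?_
  rw [add_comm k m, inv_pow]
  field_simp
  ring

noncomputable def eulerTransform {E : Type*} [AddCommMonoid E] [Module ℝ E] (a : ℕ → E)
    (n : ℕ) : E :=
  ∑ k ∈ range (n + 1), ((n.choose k : ℝ) / 2 ^ (n + 1)) • a k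

theorem hasSum_eulerTransform {E : Type*} [NormedAddCommGroup E] [NormedSpace ℝ E]
    [CompleteSpace E] {a : ℕ → E} (ha : Summable (‖a ·‖)) :
    HasSum (eulerTransform a) (∑' k, a k) := by
  set f : ℕ × ℕ → E := fun p ↦ (((p.1 + p.2).choose p.1 : ℝ) / 2 ^ (p.1 + p.2 + 1)) • a p.1
  have hfiber (k : ℕ) : HasSum (fun m ↦ f (k, m)) (a k) := by
    simpa using (hasSum_choose_add_div_two_pow k).smul_const (a k)
  have hfiber_norm (k : ℕ) : HasSum (fun m ↦ ‖f (k, m)‖) ‖a k‖ := by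
    simpa [f, norm_smul] using (hasSum_choose_add_div_two_pow k).mul_right ‖a k‖
  have hf : Summable f := by
    refine Summable.of_norm ((summable_prod_of_nonneg fun _ ↦ norm_nonneg _).2
      ⟨fun k ↦ (hfiber_norm k).summable, ?_⟩)
    simpa only [fun k ↦ (hfiber_norm k).tsum_eq] using ha
  have hf_sum : HasSum f (∑' k, a k) := by
    simpa only [hf.tsum_prod' fun k ↦ (hfiber k).summable, fun k ↦ (hfiber k).tsum_eq]
      using hf.hasSum
  refine hf_sum.sum_antidiagonal.congr_fun fun n ↦ ?_
  calc eulerTransform a n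
      = ∑ p ∈ antidiagonal n, ((n.choose p.1 : ℝ) / 2 ^ (n + 1)) • a p.1 := by
        rw [eulerTransform, Nat.sum_antidiagonal_eq_sum_range_succ_mk]
    _ = ∑ p ∈ antidiagonal n, f p :=
        Nat.sum_antidiagonal_subst (f := fun p n ↦ ((n.choose p.1 : ℝ) / 2 ^ (n + 1)) • a p.1)

theorem summable_norm_natCast_add_one_cpow_neg {s : ℂ} (hs : 1 < s.re) :
    Summable fun k : ℕ ↦ ‖((k + 1 : ℕ) : ℂ) ^ (-s)‖ := by
  simp_rw [Complex.norm_natCast_cpow_of_pos (Nat.succ_pos _), Complex.neg_re]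
  exact (summable_nat_add_iff 1).2 (Real.summable_nat_rpow.2 (by linarith))

theorem euler_transform_hasSum_riemannZeta (s : ℂ) (hs : 1 < s.re) :
    HasSum (fun n : ℕ =>
      (1 / 2 ^ (n + 1) : ℂ) *
        ∑ k ∈ Finset.range (n + 1), (n.choose k : ℂ) * ((k + 1 : ℕ) : ℂ) ^ (-s))
      (riemannZeta s) := by
  have hζ : riemannZeta s = ∑' k : ℕ, ((k + 1 : ℕ) : ℂ) ^ (-s) := by
    simp [zeta_eq_tsum_one_div_nat_add_one_cpow hs, Complex.cpow_neg]
  rw [hζ]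
  refine (hasSum_eulerTransform (summable_norm_natCast_add_one_cpow_neg hs)).congr_fun fun n ↦ ?_
  simp [eulerTransform, Complex.real_smul, mul_sum, div_eq_inv_mul, mul_assoc]
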